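/- Let p ≥ 3 be a prime and let G_e = ⟨a, b, c⟩ be the EGS-group defined by a non-zero vector e = (e_1,…,e_{p−1}) ∈ (Z/pZ)^{p−1}. Suppose there exists j ∈ {1,…,p−1} such that e_j ≠ 0 and e_{p−j} = 0. Then G_e is liftable: the assignment σ(a) = (b^{a^{1−j}})^{(e_j)^{−1}}, σ(b) = b^a, σ(c) = c extends to a group homomorphism σ : G_e → St_{G_e}(0) such that π_0 ∘ σ is the identity on G_e. -/

import Mathlib

/-- An automorphism of the rooted `p`-ary tree, encoded by its portrait:
at every vertex (a finite word over `Fin p`) it records the permutation of the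
`p` subtrees hanging at that vertex. -/
@[ext]
structure TreeAut (p : ℕ) where
  perm : List (Fin p) → Equiv.Perm (Fin p)

namespace TreeAut

variable {p : ℕ}

/-- The section of a tree automorphism at a first-level vertex `x`. -/
def sect (g : TreeAut p) (x : Fin p) : TreeAut p := ⟨fun v => g.perm (x :: v)⟩

/-- The section of a tree automorphism at an arbitrary vertex. -/
def sectV (g : TreeAut p) : List (Fin p) → TreeAut p
  | [] => g
  | x :: v => (g.sect x).sectV v

/-- The action of a tree automorphism on vertices (finite words over `Fin p`). -/
def act (g : TreeAut p) : List (Fin p) → List (Fin p)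
  | [] => []
  | x :: v => g.perm [] x :: (g.sect x).act v

/-- The inverse of the action of a tree automorphism on vertices. -/
def actInv (g : TreeAut p) : List (Fin p) → List (Fin p)
  | [] => []
  | x :: v => (g.perm []).symm x :: (g.sect ((g.perm []).symm x)).actInv v

instance : One (TreeAut p) := ⟨⟨fun _ => 1⟩⟩

/-- Composition convention as in the paper: `g * h` acts by `g` first, then `h`. -/
instance : Mul (TreeAut p) := ⟨fun g h => ⟨fun v => (g.perm v).trans (h.perm (g.act v))⟩⟩

instance : Inv (TreeAut p) := ⟨fun g => ⟨fun v => (g.perm (g.actInv v)).symm⟩⟩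

theorem perm_one (v : List (Fin p)) : (1 : TreeAut p).perm v = 1 := rfl

theorem perm_mul (g h : TreeAut p) (v : List (Fin p)) :
    (g * h).perm v = (g.perm v).trans (h.perm (g.act v)) := rfl

theorem perm_inv (g : TreeAut p) (v : List (Fin p)) :
    (g⁻¹).perm v = (g.perm (g.actInv v)).symm := rfl

theorem sect_one (x : Fin p) : (1 : TreeAut p).sect x = 1 := rfl

theorem sect_mul (g h : TreeAut p) (x : Fin p) :
    (g * h).sect x = g.sect x * h.sect (g.perm [] x) := rfl

theorem sect_inv (g : TreeAut p) (x : Fin p) :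
    (g⁻¹).sect x = (g.sect ((g.perm []).symm x))⁻¹ := rfl

theorem act_one : ∀ v : List (Fin p), (1 : TreeAut p).act v = v
  | [] => rfl
  | x :: v => by
    show (1 : Equiv.Perm (Fin p)) x :: ((1 : TreeAut p).sect x).act v = x :: v
    rw [sect_one, act_one v]
    rfl

theorem act_mul : ∀ (v : List (Fin p)) (g h : TreeAut p), (g * h).act v = h.act (g.act v)
  | [], _, _ => rfl
  | x :: v, g, h => by
    show (g * h).perm [] x :: ((g * h).sect x).act v = _
    rw [sect_mul, act_mul v]
    rfl

theorem act_inv : ∀ (v : List (Fin p)) (g : TreeAut p), (g⁻¹).act v = g.actInv v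
  | [], _ => rfl
  | x :: v, g => by
    show (g⁻¹).perm [] x :: ((g⁻¹).sect x).act v = _
    rw [sect_inv, act_inv v]
    rfl

instance : Group (TreeAut p) where
  mul_assoc g h k := by
    ext v y
    simp [perm_mul, act_mul, Equiv.trans_apply]
  one_mul g := by
    ext v y
    simp [perm_mul, perm_one, act_one]
  mul_one g := by
    ext v y
    simp [perm_mul, perm_one]
  inv_mul_cancel g := by
    ext v y
    simp [perm_mul, perm_inv, perm_one, act_inv]

end TreeAut

/-- The rooted automorphism `a = (1,…,1)ε`, where `ε = (0 1 … p-1)` is the cyclic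
rotation `x ↦ x + 1` of `Fin p`. -/
def rot (p : ℕ) [NeZero p] : TreeAut p :=
  ⟨fun v => if v = [] then Equiv.addRight (1 : Fin p) else 1⟩

/-- The components of a defining vector `v ∈ (ℤ/pℤ)^{p-1}`, read `p`-periodically:
for `1 ≤ n ≤ p-1`, `vcomp v n` is the `n`-th component of `v` (and `vcomp v n = 0`
when `n ≡ 0 mod p`). -/
def vcomp {p : ℕ} [NeZero p] (v : Fin (p - 1) → ZMod p) (n : ℕ) : ZMod p :=
  if h : n % p = 0 then 0
  else v ⟨n % p - 1, by
    have h2 : n % p < p := Nat.mod_lt _ (Nat.pos_of_ne_zero (NeZero.ne p))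
    omega⟩

/-- `N` is a quasinucleus with constant `k` for the self-similar group generated by the
symmetric set `S`: all sections at level `k` of products of two elements of `S ∪ N` lie in `N`. -/
def IsQuasiNucleusWith (p : ℕ) (S N : Set (TreeAut p)) (k : ℕ) : Prop :=
  ∀ n₁ ∈ S ∪ N, ∀ n₂ ∈ S ∪ N, ∀ v : List (Fin p), v.length = k → (n₁ * n₂).sectV v ∈ N

/-- `N` is the nucleus of the group `G` with symmetric generating set `S`:
`N` is the inclusion-minimal finite subset of `G` that is a quasinucleus for some
level constant `k ≥ 1`. -/
def IsNucleusOf (p : ℕ) (S : Set (TreeAut p)) (G : Subgroup (TreeAut p)) (N : Set (TreeAut p)) : Prop :=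
  (N ⊆ (G : Set (TreeAut p)) ∧ N.Finite ∧ ∃ k, 1 ≤ k ∧ IsQuasiNucleusWith p S N k) ∧
  ∀ N' : Set (TreeAut p), N' ⊆ (G : Set (TreeAut p)) → N'.Finite →
    (∃ k, 1 ≤ k ∧ IsQuasiNucleusWith p S N' k) → N ⊆ N'
open Fin.NatCast in
/-- The defining wreath recursions of the generators `b, c` of the EGS-group defined
by a non-zero vector `e ∈ (ℤ/pℤ)^{p-1}` (Lean's `n : Fin (p-1)` is the paper's
`n = n.val + 1`): `b = (a^{e_1},…,a^{e_{p-1}},b)` and `c = (c,a^{e_1},…,a^{e_{p-1}})`,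
i.e. `b` and `c` fix all first-level vertices, `b|_{n-1} = a^{e_n}`, `b|_{p-1} = b`,
`c|_0 = c`, and `c|_n = a^{e_n}` for `1 ≤ n ≤ p-1`. -/
def IsEGSDatum (p : ℕ) [NeZero p]
    (e : Fin (p - 1) → ZMod p) (b c : TreeAut p) : Prop :=
  e ≠ 0 ∧
  (∀ x : Fin p, b.act [x] = [x]) ∧
  b.sect (((p - 1 : ℕ) : Fin p)) = b ∧
  (∀ n : Fin (p - 1), b.sect ((n.val : ℕ) : Fin p) = rot p ^ (e n).val) ∧
  (∀ x : Fin p, c.act [x] = [x]) ∧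
  c.sect 0 = c ∧
  (∀ n : Fin (p - 1), c.sect ((n.val + 1 : ℕ) : Fin p) = rot p ^ (e n).val)

/-- The EGS-group `G_e = ⟨a, b, c⟩`. -/
def EGSGroup (p : ℕ) [NeZero p] (b c : TreeAut p) : Subgroup (TreeAut p) :=
  Subgroup.closure {rot p, b, c}

theorem rot_mem_EGS (p : ℕ) [NeZero p] (b c : TreeAut p) : rot p ∈ EGSGroup p b c :=
  Subgroup.subset_closure (by simp)

theorem b_mem_EGS (p : ℕ) [NeZero p] (b c : TreeAut p) : b ∈ EGSGroup p b c :=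
  Subgroup.subset_closure (by simp)

theorem c_mem_EGS (p : ℕ) [NeZero p] (b c : TreeAut p) : c ∈ EGSGroup p b c :=
  Subgroup.subset_closure (by simp)

/-!
The lift is `σ(g) = (g, 1, …, 1) · A ^ λ(g) · B ^ μ(g)`, where `λ, μ : G_e → ℤ/p` are homomorphisms
with `λ(a) = 1`, `λ(b) = λ(c) = 0`, `μ(a) = 0`, `μ(b) = μ(c) = 1`, and `A`, `B` are chosen so that
`σ(a)` and `σ(c) = c` come out as prescribed; `σ(b) = b^a` is then a check on sections. `A` and
`B` fix the first level and have trivial section at `0`, so they commute with every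
`(g, 1, …, 1)`. Their other sections are powers of `a`, except that `A` has a power of `b` at the
vertex `p - j`, where `B` has `a ^ e_{p-j} = 1`; so `A` and `B` commute and `A ^ p = B ^ p = 1`.
Hence `σ` is a homomorphism.

`λ(g)` is the rotation of `g` at the root. For `μ`: every element of `G_e` acts by rotations on
the first two levels, so it has a vector `v(g) ∈ (ℤ/p)^p` of rotation amounts of its first-level
sections, and `v(gh) = v(g) + v(h)(· + λ(g))`. By Pascal's rule modulo `p`, the binomial moment
`φ_k(v) = ∑ₓ (x choose k) v_x` is shift invariant on vectors whose lower moments vanish. Taking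
`k` minimal with `φ_k(v(b)) ≠ 0`, the elements whose vectors have vanishing lower moments form a
subgroup containing `a`, `b` and `c` (`v(c)` is a shift of `v(b)`), on which
`μ = φ_k ∘ v / φ_k(v(b))` is additive.
-/

theorem Fin.val_neg_one_of_neZero {p : ℕ} [NeZero p] : ((-1 : Fin p) : ℕ) = p - 1 := by
  obtain ⟨q, rfl⟩ : ∃ q, p = q + 1 := ⟨p - 1, (Nat.succ_pred_eq_of_pos (NeZero.pos p)).symm⟩
  exact Fin.coe_neg_one

theorem MonoidHom.apply_mem_of_generators_mem {G K : Type*} [Group G] [Group K] {S : Set G}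
    {H : Subgroup G} (σ : H →* K) (hH : Subgroup.closure S = H) {L : Subgroup K}
    (h : ∀ s (hs : s ∈ H), s ∈ S → σ ⟨s, hs⟩ ∈ L) (g : H) : σ g ∈ L := by
  subst hH
  have hrange : σ.range ≤ L := by
    rw [MonoidHom.range_eq_map, ← Subgroup.closure_closure_coe_preimage, MonoidHom.map_closure,
      Subgroup.closure_le]
    rintro _ ⟨⟨s, hs⟩, hsS, rfl⟩
    exact h s hs hsS
  exact hrange ⟨g, rfl⟩

theorem exists_monoidHom_eq_mul_pow_mul_pow {H G : Type*} [Group H] [Group G] {n : ℕ} [NeZero n]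
    (f : H →* G) {A B : G} (hA : A ^ n = 1) (hB : B ^ n = 1) (hAB : Commute A B)
    (hfA : ∀ x, Commute (f x) A) (hfB : ∀ x, Commute (f x) B) (l m : H → ZMod n)
    (hl : ∀ x y, l (x * y) = l x + l y) (hm : ∀ x y, m (x * y) = m x + m y) :
    ∃ σ : H →* G, ∀ x, σ x = f x * (A ^ (l x).val * B ^ (m x).val) := by
  have pow_val_add {C : G} (hC : C ^ n = 1) (u v : ZMod n) :
      C ^ (u + v).val = C ^ u.val * C ^ v.val := by
    rw [ZMod.val_add, ← pow_eq_pow_mod _ hC, pow_add]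
  refine ⟨MonoidHom.mk' (fun x => f x * (A ^ (l x).val * B ^ (m x).val)) fun x y => ?_,
    fun _ => rfl⟩
  simp only [hl, hm, map_mul, pow_val_add hA, pow_val_add hB, mul_assoc]
  rw [(hAB.pow_pow (l y).val (m x).val).left_comm, ((hfA y).pow_right _).left_comm,
    ((hfB y).pow_right _).left_comm]

namespace TreeAut

open Equiv Fin.NatCast

variable {p : ℕ}

theorem ext_of_perm_nil_of_sect {g h : TreeAut p} (hroot : g.perm [] = h.perm [])
    (hsect : ∀ x, g.sect x = h.sect x) : g = h := by
  ext v : 2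
  cases v with
  | nil => exact hroot
  | cons x w => exact congrArg (perm · w) (hsect x)

theorem perm_nil_mul (g h : TreeAut p) : (g * h).perm [] = (g.perm []).trans (h.perm []) := rfl

theorem perm_nil_inv (g : TreeAut p) : g⁻¹.perm [] = (g.perm []).symm := rfl

variable (p) in
def levelStab : Subgroup (TreeAut p) where
  carrier := {g | g.perm [] = 1}
  one_mem' := rfl
  mul_mem' {g h} (hg : g.perm [] = 1) (hh : h.perm [] = 1) := by
    change (g * h).perm [] = 1
    rw [perm_nil_mul, hg, hh]; rfl
  inv_mem' {g} (hg : g.perm [] = 1) := by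
    change g⁻¹.perm [] = 1
    rw [perm_nil_inv, hg]; rfl

instance : (levelStab p).Normal where
  conj_mem n (hn : n.perm [] = 1) g := by
    change (g * n * g⁻¹).perm [] = 1
    rw [perm_nil_mul, perm_nil_mul, hn, perm_nil_inv]
    ext
    simp

theorem mem_levelStab_iff {g : TreeAut p} : g ∈ levelStab p ↔ g.perm [] = 1 := Iff.rfl

theorem mem_levelStab_iff_act {g : TreeAut p} : g ∈ levelStab p ↔ ∀ x, g.act [x] = [x] := by
  simp [mem_levelStab_iff, act, Equiv.ext_iff]

variable {g h : TreeAut p}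

theorem sect_mul_of_mem_levelStab (hg : g ∈ levelStab p) (h : TreeAut p) (x : Fin p) :
    (g * h).sect x = g.sect x * h.sect x := by
  rw [sect_mul, mem_levelStab_iff.mp hg, Equiv.Perm.one_apply]

theorem sect_pow_of_mem_levelStab (hg : g ∈ levelStab p) (n : ℕ) (x : Fin p) :
    (g ^ n).sect x = g.sect x ^ n := by
  induction n with
  | zero => rfl
  | succ n ih => rw [pow_succ, pow_succ, sect_mul_of_mem_levelStab (pow_mem hg n), ih]

theorem eq_of_sect (hg : g ∈ levelStab p) (hh : h ∈ levelStab p)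
    (hsect : ∀ x, g.sect x = h.sect x) : g = h :=
  ext_of_perm_nil_of_sect (hg.trans hh.symm) hsect

theorem commute_of_sect (hg : g ∈ levelStab p) (hh : h ∈ levelStab p)
    (hsect : ∀ x, Commute (g.sect x) (h.sect x)) : Commute g h :=
  eq_of_sect (mul_mem hg hh) (mul_mem hh hg) fun x => by
    rw [sect_mul_of_mem_levelStab hg, sect_mul_of_mem_levelStab hh, (hsect x).eq]

theorem pow_eq_one_of_sect (hg : g ∈ levelStab p) {n : ℕ} (hsect : ∀ x, g.sect x ^ n = 1) :
    g ^ n = 1 :=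
  eq_of_sect (pow_mem hg n) (one_mem _) fun x => by rw [sect_pow_of_mem_levelStab hg, hsect]; rfl

theorem eq_one_of_sect_eq_self (hg : g ∈ levelStab p) (x₀ : Fin p)
    (hself : g.sect x₀ = g) (hsect : ∀ x ≠ x₀, g.sect x = 1) : g = 1 := by
  suffices ∀ v, g.perm v = 1 by ext v : 2; rw [this v]; rfl
  intro v
  induction v with
  | nil => exact hg
  | cons x w ih =>
    change (g.sect x).perm w = 1
    by_cases hx : x = x₀
    · rw [hx, hself, ih]
    · rw [hsect x hx]; rfl

variable (p) in
def rooted : Subgroup (TreeAut p) where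
  carrier := {g | ∀ x, g.sect x = 1}
  one_mem' _ := rfl
  mul_mem' {g h} (hg : ∀ x, g.sect x = 1) (hh : ∀ x, h.sect x = 1) x := by
    rw [sect_mul, hg, hh, one_mul]
  inv_mem' {g} (hg : ∀ x, g.sect x = 1) x := by rw [sect_inv, hg, inv_one]

theorem sect_mul_mul_of_mem_rooted (hh : h ∈ rooted p) {k : TreeAut p} (hk : k ∈ rooted p)
    (g : TreeAut p) (x : Fin p) : (h * g * k).sect x = g.sect (h.perm [] x) := by
  rw [sect_mul, sect_mul, hh x, hk, one_mul, mul_one]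

def binomialMoment (t : ℕ) : (Fin p → ZMod p) →+ ZMod p where
  toFun v := ∑ x : Fin p, ((x : ℕ).choose t : ZMod p) * v x
  map_zero' := by simp
  map_add' v w := by simp [mul_add, Finset.sum_add_distrib]

theorem binomialMoment_apply (t : ℕ) (v : Fin p → ZMod p) :
    binomialMoment t v = ∑ x : Fin p, ((x : ℕ).choose t : ZMod p) * v x := rfl

theorem binomialMoment_of_le {t : ℕ} (ht : p ≤ t) (v : Fin p → ZMod p) :
    binomialMoment t v = 0 := by
  rw [binomialMoment_apply]
  refine Finset.sum_eq_zero fun (x : Fin p) _ => ?_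
  rw [Nat.choose_eq_zero_of_lt (x.isLt.trans_le ht), Nat.cast_zero, zero_mul]

theorem exists_binomialMoment_ne_zero {v : Fin p → ZMod p} (hv : v ≠ 0) :
    ∃ k, binomialMoment k v ≠ 0 ∧ ∀ s < k, binomialMoment s v = 0 := by
  classical
  suffices h : ∃ t, binomialMoment t v ≠ 0 from
    ⟨Nat.find h, Nat.find_spec h, fun s hs => not_not.mp (Nat.find_min h hs)⟩
  by_contra! hzero
  refine hv (funext fun x => ?_)
  induction x using WellFoundedGT.induction with
  | _ x ih =>
    have hx := hzero x
    rwa [binomialMoment_apply, Finset.sum_eq_single x (fun y _ hyx => ?_) (by simp),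
      Nat.choose_self, Nat.cast_one, one_mul] at hx
    rcases hyx.lt_or_gt with hlt | hgt
    · rw [Nat.choose_eq_zero_of_lt hlt, Nat.cast_zero, zero_mul]
    · rw [ih y hgt, Pi.zero_apply, mul_zero]

variable [NeZero p]

theorem rot_mem_rooted : rot p ∈ rooted p := fun x => by
  ext v : 2
  simp [rot, sect, perm_one]

theorem perm_nil_rot_pow (n : ℕ) : (rot p ^ n).perm [] = Equiv.addRight (n : Fin p) := by
  induction n with
  | zero => ext; simp [perm_one]
  | succ n ih =>
    rw [pow_succ, perm_nil_mul, ih]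
    ext x
    simp [rot, add_assoc]

theorem rot_pow_p : rot p ^ p = 1 :=
  ext_of_perm_nil_of_sect (by ext; simp [perm_nil_rot_pow, perm_one])
    (pow_mem rot_mem_rooted p)

theorem rot_pow_pow_p (n : ℕ) : (rot p ^ n) ^ p = 1 := by
  rw [pow_right_comm, rot_pow_p, one_pow]

theorem sect_rot_pow_mul_mul_inv (g : TreeAut p) (n : ℕ) (x : Fin p) :
    (rot p ^ n * g * (rot p ^ n)⁻¹).sect x = g.sect (x + n) := by
  rw [sect_mul_mul_of_mem_rooted (pow_mem rot_mem_rooted n) (inv_mem (pow_mem rot_mem_rooted n)),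
    perm_nil_rot_pow, Equiv.coe_addRight]

theorem sect_rot_inv_mul_mul (g : TreeAut p) (x : Fin p) :
    ((rot p)⁻¹ * g * rot p).sect x = g.sect (x - 1) := by
  rw [sect_mul_mul_of_mem_rooted (inv_mem rot_mem_rooted) rot_mem_rooted, perm_nil_inv]
  simpa [Equiv.addRight_symm, sub_eq_add_neg] using
    congrArg (fun π => g.sect (π.symm x)) (perm_nil_rot_pow (p := p) 1)

/-- `(g, 1, …, 1)` in wreath-recursion notation. -/
def embZeroFun (g : TreeAut p) : TreeAut p :=
  ⟨fun v => match v with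
    | [] => 1
    | x :: w => if x = 0 then g.perm w else 1⟩

theorem embZeroFun_mem_levelStab (g : TreeAut p) : embZeroFun g ∈ levelStab p := rfl

theorem sect_embZeroFun (g : TreeAut p) (x : Fin p) :
    (embZeroFun g).sect x = if x = 0 then g else 1 := by
  ext v : 2
  by_cases hx : x = 0 <;> simp [hx, sect, embZeroFun, perm_one]

def embZero : TreeAut p →* TreeAut p :=
  MonoidHom.mk' embZeroFun fun g h =>
    eq_of_sect (embZeroFun_mem_levelStab _)
      (mul_mem (embZeroFun_mem_levelStab g) (embZeroFun_mem_levelStab h)) fun x => by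
      rw [sect_mul_of_mem_levelStab (embZeroFun_mem_levelStab g)]
      by_cases hx : x = 0 <;> simp [sect_embZeroFun, hx]

theorem embZero_mem_levelStab (g : TreeAut p) : embZero g ∈ levelStab p := rfl

theorem sect_embZero_zero (g : TreeAut p) : (embZero g).sect 0 = g := by
  simp [embZero, sect_embZeroFun]

theorem sect_embZero_of_ne (g : TreeAut p) {x : Fin p} (hx : x ≠ 0) : (embZero g).sect x = 1 := by
  simp [embZero, sect_embZeroFun, hx]

theorem commute_embZero {t : TreeAut p} (ht : t ∈ levelStab p) (ht0 : t.sect 0 = 1)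
    (g : TreeAut p) : Commute (embZero g) t :=
  commute_of_sect (embZero_mem_levelStab g) ht fun x => by
    by_cases hx : x = 0
    · rw [hx, ht0]; exact Commute.one_right _
    · rw [sect_embZero_of_ne g hx]; exact Commute.one_left _

def liftCorrA (b : TreeAut p) (j m : ℕ) : TreeAut p :=
  (embZero (rot p))⁻¹ * (rot p ^ j * b * (rot p ^ j)⁻¹) ^ m

def liftCorrB (c : TreeAut p) : TreeAut p := (embZero c)⁻¹ * c

theorem sect_liftCorrB_of_ne_zero (c : TreeAut p) {x : Fin p} (hx : x ≠ 0) :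
    (liftCorrB c).sect x = c.sect x := by
  rw [liftCorrB, sect_mul_of_mem_levelStab (inv_mem (embZero_mem_levelStab _)), ← map_inv,
    sect_embZero_of_ne _ hx, one_mul]

def IsRotation (π : Perm (Fin p)) : Prop := ∀ x, π x = x + π 0

theorem isRotation_one : IsRotation (1 : Perm (Fin p)) := fun x => by simp

theorem IsRotation.trans {π τ : Perm (Fin p)} (hπ : IsRotation π) (hτ : IsRotation τ) :
    IsRotation (π.trans τ) := fun x => by
  simp only [trans_apply]
  rw [hτ, hπ x, hτ (π 0), add_assoc]

theorem IsRotation.symm_apply {π : Perm (Fin p)} (hπ : IsRotation π) (x : Fin p) :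
    π.symm x = x - π 0 :=
  π.symm_apply_eq.mpr (by rw [hπ, sub_add_cancel])

theorem IsRotation.symm {π : Perm (Fin p)} (hπ : IsRotation π) : IsRotation π.symm := fun x => by
  rw [hπ.symm_apply, hπ.symm_apply, zero_sub, sub_eq_add_neg]

def rotAmount (π : Perm (Fin p)) : ZMod p := ((π 0 : Fin p) : ℕ)

theorem rotAmount_one : rotAmount (1 : Perm (Fin p)) = 0 := by simp [rotAmount]

theorem rotAmount_trans (π : Perm (Fin p)) {τ : Perm (Fin p)} (hτ : IsRotation τ) :
    rotAmount (π.trans τ) = rotAmount π + rotAmount τ := by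
  rw [rotAmount, trans_apply, hτ, Fin.val_add, ZMod.natCast_mod, Nat.cast_add]; rfl

theorem rotAmount_perm_nil_rot_pow (n : ℕ) : rotAmount ((rot p ^ n).perm []) = n := by
  simp [rotAmount, perm_nil_rot_pow]

theorem isRotation_perm_nil_rot_pow (n : ℕ) : IsRotation ((rot p ^ n).perm []) := fun x => by
  simp [perm_nil_rot_pow]

def sectRotVec (g : TreeAut p) (x : Fin p) : ZMod p := rotAmount ((g.sect x).perm [])

theorem sectRotVec_one : sectRotVec (1 : TreeAut p) = 0 := funext fun _ => rotAmount_one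

theorem sectRotVec_mul {g h : TreeAut p} (hg : IsRotation (g.perm []))
    (hh : ∀ x, IsRotation ((h.sect x).perm [])) :
    sectRotVec (g * h) = sectRotVec g + fun x => sectRotVec h (x + g.perm [] 0) := by
  funext x
  rw [Pi.add_apply, sectRotVec, sect_mul, perm_nil_mul, rotAmount_trans _ (hh _), ← hg]
  rfl

theorem sectRotVec_of_mem_rooted {g : TreeAut p} (hg : g ∈ rooted p) : sectRotVec g = 0 :=
  funext fun x => by rw [sectRotVec, hg x]; exact rotAmount_one

/-- Pascal's rule; the wrap-around term vanishes because `p ∣ (p choose (t + 1))`. -/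
theorem binomialMoment_comp_sub_one [Fact p.Prime] {t : ℕ} (ht : t + 1 < p)
    (w : Fin p → ZMod p) :
    binomialMoment (t + 1) (fun x => w (x - 1)) =
      binomialMoment (t + 1) w + binomialMoment t w := by
  obtain ⟨q, rfl⟩ : ∃ q, p = q + 1 := ⟨p - 1, (Nat.succ_pred_eq_of_pos (NeZero.pos p)).symm⟩
  simp only [binomialMoment_apply, ← Finset.sum_add_distrib, ← add_mul]
  rw [← Equiv.sum_comp (Equiv.addRight 1)]
  refine Finset.sum_congr rfl fun y _ => ?_
  simp only [Equiv.coe_addRight, add_sub_cancel_right]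
  congr 1
  rw [Fin.val_add_one]
  split_ifs with hy
  · rw [hy, Fin.val_last, Nat.choose_zero_succ, Nat.cast_zero, ← Nat.cast_add,
      add_comm (q.choose _), ← Nat.choose_succ_succ', eq_comm, ZMod.natCast_eq_zero_iff]
    exact (Fact.out : (q + 1).Prime).dvd_choose_self t.succ_ne_zero ht
  · rw [Nat.choose_succ_succ', Nat.cast_add]
    exact add_comm _ _

theorem binomialMoment_comp_add_one [Fact p.Prime] {t : ℕ} {v : Fin p → ZMod p}
    (hv : ∀ s < t, binomialMoment s v = 0) :
    binomialMoment t (fun x => v (x + 1)) = binomialMoment t v := by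
  induction t using Nat.strong_induction_on with
  | _ t ih =>
    rcases t with _ | s
    · simp only [binomialMoment_apply, Nat.choose_zero_right, Nat.cast_one, one_mul]
      exact Equiv.sum_comp (Equiv.addRight 1) v
    · rcases lt_or_ge (s + 1) p with hs | hs
      · have hpascal := binomialMoment_comp_sub_one hs fun x => v (x + 1)
        simp only [sub_add_cancel] at hpascal
        rw [hpascal, ih s s.lt_succ_self fun r hr => hv r (hr.trans s.lt_succ_self),
          hv s s.lt_succ_self, add_zero]
      · rw [binomialMoment_of_le hs, binomialMoment_of_le hs]

theorem binomialMoment_comp_add [Fact p.Prime] {t : ℕ} {v : Fin p → ZMod p}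
    (hv : ∀ s < t, binomialMoment s v = 0) (d : Fin p) :
    binomialMoment t (fun x => v (x + d)) = binomialMoment t v := by
  obtain ⟨n, rfl⟩ : ∃ n : ℕ, (n : Fin p) = d := ⟨d, Fin.cast_val_eq_self d⟩
  induction n generalizing t with
  | zero => simp
  | succ n ih =>
    have hshift : ∀ s < t, binomialMoment s (fun x => v (x + n)) = 0 := fun s hs => by
      rw [ih fun r hr => hv r (hr.trans hs)]; exact hv s hs
    rw [← ih hv, ← binomialMoment_comp_add_one hshift]
    simp [add_assoc, add_comm (1 : Fin p)]

variable (p) in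
def rotFiltration [Fact p.Prime] (k : ℕ) : Subgroup (TreeAut p) where
  carrier := {g | IsRotation (g.perm []) ∧ (∀ x, IsRotation ((g.sect x).perm [])) ∧
    ∀ t < k, binomialMoment t (sectRotVec g) = 0}
  one_mem' := ⟨isRotation_one, fun _ => isRotation_one, fun t _ => by
    rw [sectRotVec_one, map_zero]⟩
  mul_mem' := by
    rintro g h ⟨hg, hgs, hgv⟩ ⟨hh, hhs, hhv⟩
    refine ⟨hg.trans hh, fun x => (hgs x).trans (hhs _), fun t ht => ?_⟩
    rw [sectRotVec_mul hg hhs, map_add, hgv t ht,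
      binomialMoment_comp_add (fun s hs => hhv s (hs.trans ht)), hhv t ht, add_zero]
  inv_mem' := by
    rintro g ⟨hg, hgs, hgv⟩
    have hinv : IsRotation (g⁻¹.perm []) := hg.symm
    refine ⟨hinv, fun x => (hgs _).symm, fun t ht => ?_⟩
    have hvec := sectRotVec_mul hinv hgs
    rw [inv_mul_cancel, sectRotVec_one, eq_comm, add_eq_zero_iff_eq_neg] at hvec
    rw [hvec, map_neg, binomialMoment_comp_add (fun s hs => hgv s (hs.trans ht)), hgv t ht,
      neg_zero]

theorem rot_mem_rotFiltration [Fact p.Prime] (k : ℕ) : rot p ∈ rotFiltration p k := by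
  refine ⟨by simpa using isRotation_perm_nil_rot_pow (p := p) 1, fun x => ?_, fun t _ => ?_⟩
  · rw [rot_mem_rooted x]; exact isRotation_one
  · rw [sectRotVec_of_mem_rooted rot_mem_rooted, map_zero]

variable [Fact p.Prime] {k : ℕ} {g h : TreeAut p}

theorem rotAmount_perm_nil_mul (hh : h ∈ rotFiltration p k) :
    rotAmount ((g * h).perm []) = rotAmount (g.perm []) + rotAmount (h.perm []) :=
  rotAmount_trans _ hh.1

theorem binomialMoment_sectRotVec_mul (hg : g ∈ rotFiltration p k) (hh : h ∈ rotFiltration p k) :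
    binomialMoment k (sectRotVec (g * h)) =
      binomialMoment k (sectRotVec g) + binomialMoment k (sectRotVec h) := by
  rw [sectRotVec_mul hg.1 hh.2.1, map_add, binomialMoment_comp_add hh.2.2]


end TreeAut

theorem vcomp_val_add_one {p : ℕ} [NeZero p] (v : Fin (p - 1) → ZMod p) (n : Fin (p - 1)) :
    vcomp v (n.val + 1) = v n := by
  have hn : n.val + 1 < p := by omega
  rw [vcomp, dif_neg (by rw [Nat.mod_eq_of_lt hn]; omega)]
  congr 1
  ext
  simp [Nat.mod_eq_of_lt hn]

namespace IsEGSDatum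

open TreeAut Fin.NatCast

variable {p : ℕ} [NeZero p] {e : Fin (p - 1) → ZMod p} {b c : TreeAut p}

theorem b_mem_levelStab (hd : IsEGSDatum p e b c) : b ∈ levelStab p :=
  mem_levelStab_iff_act.mpr hd.2.1

theorem c_mem_levelStab (hd : IsEGSDatum p e b c) : c ∈ levelStab p :=
  mem_levelStab_iff_act.mpr hd.2.2.2.2.1

theorem perm_nil_b (hd : IsEGSDatum p e b c) : b.perm [] = 1 := hd.b_mem_levelStab

theorem perm_nil_c (hd : IsEGSDatum p e b c) : c.perm [] = 1 := hd.c_mem_levelStab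

theorem sect_b_neg_one (hd : IsEGSDatum p e b c) : b.sect (-1) = b := by
  convert hd.2.2.1
  ext
  rw [Fin.val_neg_one_of_neZero, Fin.val_natCast, Nat.mod_eq_of_lt (by have := NeZero.pos p; omega)]

theorem sect_b_of_ne_neg_one (hd : IsEGSDatum p e b c) {y : Fin p} (hy : y ≠ -1) :
    b.sect y = rot p ^ (vcomp e (y.val + 1)).val := by
  have hyp : y.val < p - 1 := by
    have := y.isLt
    have : y.val ≠ p - 1 := fun h => hy (Fin.ext (h.trans Fin.val_neg_one_of_neZero.symm))
    omega
  rw [show vcomp e (y.val + 1) = e ⟨y.val, hyp⟩ from vcomp_val_add_one e ⟨y.val, hyp⟩]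
  simpa using hd.2.2.2.1 ⟨y.val, hyp⟩

theorem sect_c_of_ne_zero (hd : IsEGSDatum p e b c) {x : Fin p} (hx : x ≠ 0) :
    c.sect x = rot p ^ (vcomp e x.val).val := by
  have hx0 : x.val ≠ 0 := Fin.val_ne_of_ne hx
  have hsub : x.val - 1 + 1 = x.val := by omega
  have hvcomp := vcomp_val_add_one e ⟨x.val - 1, by omega⟩
  have hsect := hd.2.2.2.2.2.2 ⟨x.val - 1, by omega⟩
  rw [hsub] at hvcomp
  rwa [← hvcomp, hsub, Fin.cast_val_eq_self] at hsect

theorem sect_b_sub_one (hd : IsEGSDatum p e b c) {x : Fin p} (hx : x ≠ 0) :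
    b.sect (x - 1) = c.sect x := by
  rw [hd.sect_b_of_ne_neg_one (by simpa [sub_eq_neg_self] using hx), hd.sect_c_of_ne_zero hx,
    Fin.val_sub_one_of_ne_zero hx,
    Nat.sub_add_cancel (Nat.one_le_iff_ne_zero.mpr (Fin.val_ne_of_ne hx))]

theorem b_pow_p (hd : IsEGSDatum p e b c) : b ^ p = 1 := by
  have hb := hd.b_mem_levelStab
  refine eq_one_of_sect_eq_self (pow_mem hb p) (-1) ?_ fun x hx => ?_
  · rw [sect_pow_of_mem_levelStab hb, hd.sect_b_neg_one]
  · rw [sect_pow_of_mem_levelStab hb, hd.sect_b_of_ne_neg_one hx, rot_pow_pow_p]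

theorem sect_b_pow_p (hd : IsEGSDatum p e b c) (y : Fin p) : b.sect y ^ p = 1 := by
  by_cases hy : y = -1
  · rw [hy, hd.sect_b_neg_one, hd.b_pow_p]
  · rw [hd.sect_b_of_ne_neg_one hy, rot_pow_pow_p]

theorem isRotation_sect_b (hd : IsEGSDatum p e b c) (y : Fin p) :
    IsRotation ((b.sect y).perm []) := by
  by_cases hy : y = -1
  · rw [hy, hd.sect_b_neg_one, hd.perm_nil_b]; exact isRotation_one
  · rw [hd.sect_b_of_ne_neg_one hy]; exact isRotation_perm_nil_rot_pow _

theorem sectRotVec_c (hd : IsEGSDatum p e b c) :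
    sectRotVec c = fun x => sectRotVec b (x + -1) := by
  funext x
  by_cases hx : x = 0
  · rw [hx, zero_add, sectRotVec, sectRotVec, hd.sect_b_neg_one, hd.2.2.2.2.2.1,
      hd.perm_nil_b, hd.perm_nil_c]
  · rw [sectRotVec, sectRotVec, ← sub_eq_add_neg, hd.sect_b_sub_one hx]

theorem sectRotVec_b_ne_zero (hd : IsEGSDatum p e b c) : sectRotVec b ≠ 0 := by
  obtain ⟨n, hn⟩ := Function.ne_iff.mp hd.1
  refine Function.ne_iff.mpr ⟨n.val, ?_⟩
  rwa [sectRotVec, hd.2.2.2.1 n, rotAmount_perm_nil_rot_pow, ZMod.natCast_zmod_val]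

theorem liftCorrA_mem_levelStab (hd : IsEGSDatum p e b c) (j m : ℕ) :
    liftCorrA b j m ∈ levelStab p :=
  mul_mem (inv_mem (embZero_mem_levelStab _))
    (pow_mem (Subgroup.Normal.conj_mem inferInstance b hd.b_mem_levelStab _) m)

theorem sect_liftCorrA_of_ne_zero (hd : IsEGSDatum p e b c) (j m : ℕ) {x : Fin p} (hx : x ≠ 0) :
    (liftCorrA b j m).sect x = b.sect (x + j) ^ m := by
  rw [liftCorrA, sect_mul_of_mem_levelStab (inv_mem (embZero_mem_levelStab _)), ← map_inv,
    sect_embZero_of_ne _ hx, one_mul,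
    sect_pow_of_mem_levelStab (Subgroup.Normal.conj_mem inferInstance b hd.b_mem_levelStab _),
    sect_rot_pow_mul_mul_inv]

theorem sect_liftCorrA_zero [Fact p.Prime] (hd : IsEGSDatum p e b c) {j : Fin (p - 1)}
    (hj : e j ≠ 0) : (liftCorrA b j ((e j)⁻¹).val).sect 0 = 1 := by
  rw [liftCorrA, sect_mul_of_mem_levelStab (inv_mem (embZero_mem_levelStab _)), ← map_inv,
    sect_embZero_zero,
    sect_pow_of_mem_levelStab (Subgroup.Normal.conj_mem inferInstance b hd.b_mem_levelStab _),
    sect_rot_pow_mul_mul_inv, zero_add, hd.2.2.2.1 j, ← pow_mul, pow_eq_pow_mod _ rot_pow_p,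
    ← ZMod.val_mul, mul_inv_cancel₀ hj, ZMod.val_one, pow_one, inv_mul_cancel]

theorem liftCorrA_pow_p [Fact p.Prime] (hd : IsEGSDatum p e b c) {j : Fin (p - 1)}
    (hj : e j ≠ 0) : liftCorrA b j ((e j)⁻¹).val ^ p = 1 := by
  refine pow_eq_one_of_sect (hd.liftCorrA_mem_levelStab _ _) fun x => ?_
  by_cases hx : x = 0
  · rw [hx, hd.sect_liftCorrA_zero hj, one_pow]
  · rw [hd.sect_liftCorrA_of_ne_zero _ _ hx, pow_right_comm, hd.sect_b_pow_p, one_pow]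

theorem liftCorrB_mem_levelStab (hd : IsEGSDatum p e b c) : liftCorrB c ∈ levelStab p :=
  mul_mem (inv_mem (embZero_mem_levelStab _)) hd.c_mem_levelStab

theorem sect_liftCorrB_zero (hd : IsEGSDatum p e b c) : (liftCorrB c).sect 0 = 1 := by
  rw [liftCorrB, sect_mul_of_mem_levelStab (inv_mem (embZero_mem_levelStab _)), ← map_inv,
    sect_embZero_zero, hd.2.2.2.2.2.1, inv_mul_cancel]

theorem liftCorrB_pow_p (hd : IsEGSDatum p e b c) : liftCorrB c ^ p = 1 := by
  refine pow_eq_one_of_sect hd.liftCorrB_mem_levelStab fun x => ?_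
  by_cases hx : x = 0
  · rw [hx, hd.sect_liftCorrB_zero, one_pow]
  · rw [sect_liftCorrB_of_ne_zero c hx, hd.sect_c_of_ne_zero hx, rot_pow_pow_p]

theorem commute_liftCorrA_liftCorrB [Fact p.Prime] (hd : IsEGSDatum p e b c) {j : Fin (p - 1)}
    (hj : e j ≠ 0) (hpj : vcomp e (p - (j.val + 1)) = 0) :
    Commute (liftCorrA b j ((e j)⁻¹).val) (liftCorrB c) := by
  refine commute_of_sect (hd.liftCorrA_mem_levelStab _ _) hd.liftCorrB_mem_levelStab fun x => ?_
  by_cases hx : x = 0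
  · rw [hx, hd.sect_liftCorrA_zero hj]; exact Commute.one_left _
  rw [hd.sect_liftCorrA_of_ne_zero _ _ hx, sect_liftCorrB_of_ne_zero c hx, hd.sect_c_of_ne_zero hx]
  by_cases hxj : x + j = -1
  · have hxval : x.val = p - (j.val + 1) := by
      have hsum := congrArg Fin.val hxj
      rw [Fin.val_add_eq_ite, Fin.val_natCast, Nat.mod_eq_of_lt (by omega),
        Fin.val_neg_one_of_neZero] at hsum
      have := x.isLt
      split_ifs at hsum <;> omega
    rw [hxval, hpj, ZMod.val_zero, pow_zero]
    exact Commute.one_right _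
  · rw [hd.sect_b_of_ne_neg_one hxj]
    exact ((Commute.refl _).pow_pow _ _).pow_left _

theorem embZero_mul_liftCorrB (hd : IsEGSDatum p e b c) :
    embZero b * liftCorrB c = (rot p)⁻¹ * b * rot p := by
  refine eq_of_sect (mul_mem (embZero_mem_levelStab b) hd.liftCorrB_mem_levelStab)
    (Subgroup.Normal.conj_mem' inferInstance b hd.b_mem_levelStab _) fun x => ?_
  rw [sect_mul_of_mem_levelStab (embZero_mem_levelStab b), sect_rot_inv_mul_mul]
  by_cases hx : x = 0
  · rw [hx, sect_embZero_zero, hd.sect_liftCorrB_zero, zero_sub, hd.sect_b_neg_one, mul_one]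
  · rw [sect_embZero_of_ne _ hx, sect_liftCorrB_of_ne_zero c hx, hd.sect_b_sub_one hx, one_mul]

variable [Fact p.Prime] {k : ℕ}

theorem egsGroup_le_rotFiltration (hd : IsEGSDatum p e b c)
    (hk : ∀ s < k, binomialMoment s (sectRotVec b) = 0) :
    EGSGroup p b c ≤ rotFiltration p k := by
  rw [EGSGroup, Subgroup.closure_le]
  rintro g (rfl | rfl | rfl)
  · exact rot_mem_rotFiltration k
  · exact ⟨by rw [hd.perm_nil_b]; exact isRotation_one, hd.isRotation_sect_b, hk⟩
  · refine ⟨by rw [hd.perm_nil_c]; exact isRotation_one, fun x => ?_, fun s hs => ?_⟩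
    · by_cases hx : x = 0
      · rw [hx, hd.2.2.2.2.2.1, hd.perm_nil_c]; exact isRotation_one
      · rw [← hd.sect_b_sub_one hx]; exact hd.isRotation_sect_b _
    · rw [hd.sectRotVec_c, binomialMoment_comp_add (fun r hr => hk r (hr.trans hs)), hk s hs]

theorem binomialMoment_sectRotVec_c (hd : IsEGSDatum p e b c)
    (hk : ∀ s < k, binomialMoment s (sectRotVec b) = 0) :
    binomialMoment k (sectRotVec c) = binomialMoment k (sectRotVec b) := by
  rw [hd.sectRotVec_c, binomialMoment_comp_add hk]

theorem exists_lift (hd : IsEGSDatum p e b c) {j : Fin (p - 1)} (hj : e j ≠ 0)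
    (hpj : vcomp e (p - (j.val + 1)) = 0) :
    ∃ σ : EGSGroup p b c →* TreeAut p,
      (∀ g, σ g ∈ levelStab p ∧ (σ g).sect 0 = g) ∧
      σ ⟨rot p, rot_mem_EGS p b c⟩ = (rot p ^ j.val * b * (rot p ^ j.val)⁻¹) ^ ((e j)⁻¹).val ∧
      σ ⟨b, b_mem_EGS p b c⟩ = (rot p)⁻¹ * b * rot p ∧
      σ ⟨c, c_mem_EGS p b c⟩ = c := by
  obtain ⟨k, hk, hlow⟩ := exists_binomialMoment_ne_zero hd.sectRotVec_b_ne_zero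
  have hG := hd.egsGroup_le_rotFiltration hlow
  have hA := hd.liftCorrA_mem_levelStab j ((e j)⁻¹).val
  have hA0 := hd.sect_liftCorrA_zero hj
  obtain ⟨σ, hσ⟩ := exists_monoidHom_eq_mul_pow_mul_pow (embZero.comp (EGSGroup p b c).subtype)
    (hd.liftCorrA_pow_p hj) hd.liftCorrB_pow_p (hd.commute_liftCorrA_liftCorrB hj hpj)
    (fun _ => commute_embZero hA hA0 _)
    (fun _ => commute_embZero hd.liftCorrB_mem_levelStab hd.sect_liftCorrB_zero _)
    (fun g => rotAmount ((g : TreeAut p).perm []))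
    (fun g => binomialMoment k (sectRotVec g) * (binomialMoment k (sectRotVec b))⁻¹)
    (fun _ y => rotAmount_perm_nil_mul (hG y.2))
    (fun x y => by rw [Subgroup.coe_mul, binomialMoment_sectRotVec_mul (hG x.2) (hG y.2),
      add_mul])
  have hrot : rotAmount ((rot p).perm []) = 1 := by
    simpa using rotAmount_perm_nil_rot_pow (p := p) 1
  refine ⟨σ, fun g => ⟨?_, ?_⟩, ?_, ?_, ?_⟩ <;>
    simp only [hσ, MonoidHom.comp_apply, Subgroup.coe_subtype]
  · exact mul_mem (embZero_mem_levelStab _)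
      (mul_mem (pow_mem hA _) (pow_mem hd.liftCorrB_mem_levelStab _))
  · rw [sect_mul_of_mem_levelStab (embZero_mem_levelStab _),
      sect_mul_of_mem_levelStab (pow_mem hA _), sect_pow_of_mem_levelStab hA,
      sect_pow_of_mem_levelStab hd.liftCorrB_mem_levelStab, hA0, hd.sect_liftCorrB_zero,
      one_pow, one_pow, mul_one, mul_one, sect_embZero_zero]
  · rw [hrot, sectRotVec_of_mem_rooted rot_mem_rooted, map_zero, zero_mul, ZMod.val_one,
      ZMod.val_zero, pow_one, pow_zero, mul_one, liftCorrA, mul_inv_cancel_left]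
  · rw [hd.perm_nil_b, rotAmount_one, mul_inv_cancel₀ hk, ZMod.val_one, ZMod.val_zero, pow_one,
      pow_zero, one_mul, hd.embZero_mul_liftCorrB]
  · rw [hd.perm_nil_c, rotAmount_one, hd.binomialMoment_sectRotVec_c hlow, mul_inv_cancel₀ hk,
      ZMod.val_one, ZMod.val_zero, pow_one, pow_zero, one_mul, liftCorrB, mul_inv_cancel_left]

end IsEGSDatum

/-- Lean's `j : Fin (p - 1)` is the paper's `j = j.val + 1`, and `g^h = h⁻¹gh`. -/
theorem EGS_liftable_general (p : ℕ) [Fact p.Prime] [NeZero p]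
    (e : Fin (p - 1) → ZMod p) (b c : TreeAut p)
    (hdatum : IsEGSDatum p e b c)
    (j : Fin (p - 1))
    (hj : e j ≠ 0)
    (hpj : vcomp e (p - (j.val + 1)) = 0) :
    ∃ σ : EGSGroup p b c →* TreeAut p,
      (∀ g, σ g ∈ EGSGroup p b c) ∧
      (∀ g, (σ g).act [(0 : Fin p)] = [(0 : Fin p)]) ∧
      (∀ g : EGSGroup p b c, (σ g).sect 0 = (g : TreeAut p)) ∧
      σ ⟨rot p, rot_mem_EGS p b c⟩ =
        ((rot p ^ ((1 : ℤ) - (j.val + 1)))⁻¹ * b *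
            rot p ^ ((1 : ℤ) - (j.val + 1))) ^ ((e j)⁻¹).val ∧
      σ ⟨b, b_mem_EGS p b c⟩ = (rot p)⁻¹ * b * rot p ∧
      σ ⟨c, c_mem_EGS p b c⟩ = c := by
  obtain ⟨σ, hσ, hσa, hσb, hσc⟩ := hdatum.exists_lift hj hpj
  have hconj : rot p ^ ((1 : ℤ) - (j.val + 1)) = (rot p ^ j.val)⁻¹ := by
    rw [show (1 : ℤ) - (j.val + 1) = -(j.val : ℤ) by ring, zpow_neg, zpow_natCast]
  have ha := rot_mem_EGS p b c
  have hb := b_mem_EGS p b c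
  refine ⟨σ, σ.apply_mem_of_generators_mem rfl ?_,
    fun g => TreeAut.mem_levelStab_iff_act.mp (hσ g).1 0, fun g => (hσ g).2,
    by rw [hσa, hconj, inv_inv], hσb, hσc⟩
  rintro s - (rfl | rfl | rfl)
  · rw [hσa]
    exact pow_mem (mul_mem (mul_mem (pow_mem ha _) hb) (inv_mem (pow_mem ha _))) _
  · rw [hσb]
    exact mul_mem (mul_mem (inv_mem ha) hb) ha
  · rwa [hσc]

/-- **Liftability of EGS-groups.** Let `p ≥ 3` be a prime and `G_e = ⟨a,b,c⟩` the
EGS-group defined by a non-zero vector `e ∈ (ℤ/pℤ)^{p-1}`. If there is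
`j ∈ {1,…,p-1}` with `e_j ≠ 0` and `e_{p-j} = 0`, then `G_e` is liftable: the
assignment `σ(a) = (b^{a^{1-j}})^{(e_j)⁻¹}`, `σ(b) = b^a`, `σ(c) = c` extends to a
homomorphism `σ : G_e → St_{G_e}(0)` with `π₀ ∘ σ = id`.
(Lean's `j : Fin (p-1)` is the paper's `j = j.val + 1`; `g^h = h⁻¹gh`.) -/
theorem EGS_liftable (p : ℕ) [Fact p.Prime] [NeZero p] (hp3 : 3 ≤ p)
    (e : Fin (p - 1) → ZMod p) (b c : TreeAut p)
    (hdatum : IsEGSDatum p e b c)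
    (j : Fin (p - 1))
    (hj : e j ≠ 0)
    (hpj : vcomp e (p - (j.val + 1)) = 0) :
    ∃ σ : EGSGroup p b c →* TreeAut p,
      (∀ g, σ g ∈ EGSGroup p b c) ∧
      (∀ g, (σ g).act [(0 : Fin p)] = [(0 : Fin p)]) ∧
      (∀ g : EGSGroup p b c, (σ g).sect 0 = (g : TreeAut p)) ∧
      σ ⟨rot p, rot_mem_EGS p b c⟩ =
        ((rot p ^ ((1 : ℤ) - (j.val + 1)))⁻¹ * b *
            rot p ^ ((1 : ℤ) - (j.val + 1))) ^ ((e j)⁻¹).val ∧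
      σ ⟨b, b_mem_EGS p b c⟩ = (rot p)⁻¹ * b * rot p ∧
      σ ⟨c, c_mem_EGS p b c⟩ = c :=
  EGS_liftable_general p e b c hdatum j hj hpj
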